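/- arXiv:0804.2696 — 6 statements merged into one kernel-verified Lean document; each statement's English description precedes it below -/
import Mathlib

section
/- For every real c > 0 and every real y with 0 < y < 1, the inequality (e^{4cy}-1)(e^{4c(1-y)}-1) / (2c·y(1-y)(e^{4c}-1)) < 2 holds; equivalently ((e^{4cy}-1)/y)·((e^{4c(1-y)}-1)/(1-y)) < 4c(e^{4c}-1). -/
/-!
Since `e^x - 1 = 2 e^{x/2} sinh (x/2)`, the exponential factors cancel and, with `u = 2cy` and
`v = 2c(1-y)`, the claim becomes `(u + v) sinh u sinh v < u v sinh (u + v)`. Expanding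
`sinh (u + v)`, this is the sum of the two inequalities `sinh x < x cosh x` (that is, `tanh x < x`)
at `x = u` and `x = v`, each multiplied by a positive factor.
-/

open Real Set

theorem Real.sinh_lt_mul_cosh {x : ℝ} (hx : 0 < x) : sinh x < x * cosh x := by
  have hmono : StrictMonoOn (fun x => x * cosh x - sinh x) (Ici 0) := by
    refine strictMonoOn_of_deriv_pos (convex_Ici 0) (by fun_prop) fun t ht => ?_
    rw [interior_Ici, mem_Ioi] at ht
    have hderiv : HasDerivAt (fun x => x * cosh x - sinh x) (t * sinh t) t :=
      (((hasDerivAt_id' t).mul (hasDerivAt_cosh t)).sub (hasDerivAt_sinh t)).congr_deriv (by ring)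
    rw [hderiv.deriv]
    exact mul_pos ht (sinh_pos_iff.2 ht)
  simpa using hmono self_mem_Ici hx.le hx

theorem Real.add_mul_sinh_mul_sinh_lt {u v : ℝ} (hu : 0 < u) (hv : 0 < v) :
    (u + v) * sinh u * sinh v < u * v * sinh (u + v) := by
  have hsu := sinh_pos_iff.2 hu
  have hsv := sinh_pos_iff.2 hv
  have hu' := mul_lt_mul_of_pos_left (sinh_lt_mul_cosh hu) (mul_pos hv hsv)
  have hv' := mul_lt_mul_of_pos_left (sinh_lt_mul_cosh hv) (mul_pos hu hsu)
  rw [sinh_add]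
  linarith

theorem Real.exp_sub_one_eq_mul_sinh_half (x : ℝ) :
    exp x - 1 = 2 * exp (x / 2) * sinh (x / 2) := by
  rw [sinh_eq, exp_neg]
  field_simp
  rw [sq, ← exp_add, add_halves]

theorem Real.add_mul_exp_sub_one_mul_exp_sub_one_lt {a b : ℝ} (ha : 0 < a) (hb : 0 < b) :
    (a + b) * (exp a - 1) * (exp b - 1) < a * b * (exp (a + b) - 1) := by
  have key := add_mul_sinh_mul_sinh_lt (half_pos ha) (half_pos hb)
  have hexp : 0 < 8 * exp (a / 2) * exp (b / 2) := by positivity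
  rw [exp_sub_one_eq_mul_sinh_half a, exp_sub_one_eq_mul_sinh_half b,
    exp_sub_one_eq_mul_sinh_half (a + b), add_div, exp_add]
  linear_combination mul_lt_mul_of_pos_left key hexp

/-- For `c > 0` and `0 < y < 1`,
`(e^{4cy}-1)(e^{4c(1-y)}-1) / (2c·y(1-y)(e^{4c}-1)) < 2`. -/
theorem stmt2 (c y : ℝ) (hc : 0 < c) (h0 : 0 < y) (h1 : y < 1) :
    (Real.exp (4 * c * y) - 1) * (Real.exp (4 * c * (1 - y)) - 1) /
        (2 * c * y * (1 - y) * (Real.exp (4 * c) - 1)) < 2 := by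
  have hy : 0 < 1 - y := sub_pos.2 h1
  have key := add_mul_exp_sub_one_mul_exp_sub_one_lt (by positivity : 0 < 4 * c * y)
    (by positivity : 0 < 4 * c * (1 - y))
  have hsum : 4 * c * y + 4 * c * (1 - y) = 4 * c := by ring
  rw [hsum] at key
  have hexp : 0 < exp (4 * c) - 1 := sub_pos.2 (one_lt_exp_iff.2 (by positivity))
  rw [div_lt_iff₀ (by positivity)]
  refine lt_of_mul_lt_mul_left ?_ (by positivity : (0 : ℝ) ≤ 4 * c)
  linear_combination key
end

section
/- For every c > 0, 4·(4c/(e^{4c}-1))·∑_{j=0}^∞ H_{j+1}(4c)^j/(j+2)! < 2, where H_k = 1 + 1/2 + ⋯ + 1/k is the harmonic number. -/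
open Real

/-- Harmonic bound: `H_{j+1} ≤ (j+2)/2`. -/
lemma harm_le (j : ℕ) :
    (∑ m ∈ Finset.range (j + 1), (1 : ℝ) / (m + 1)) ≤ (j + 2) / 2 := by
  induction j with
  | zero => simp
  | succ n ih =>
    rw [Finset.sum_range_succ]
    have h1 : (1 : ℝ) / (n + 1 + 1) ≤ 1 / 2 := by
      apply one_div_le_one_div_of_le
      · norm_num
      · push_cast; linarith
    push_cast
    push_cast at ih
    linarith

lemma exp_sub_one_eq (x : ℝ) (hx : x ≠ 0) :
    (∑' j : ℕ, x ^ j / (Nat.factorial (j + 1) : ℝ)) = (Real.exp x - 1) / x := by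
  have hsum : Real.exp x = ∑' n : ℕ, x ^ n / (Nat.factorial n : ℝ) := by
    rw [Real.exp_eq_exp_ℝ, NormedSpace.exp_eq_tsum_div]
  have hS : Summable (fun n : ℕ => x ^ n / (Nat.factorial n : ℝ)) :=
    Real.summable_pow_div_factorial x
  have h0 : (∑' n : ℕ, x ^ n / (Nat.factorial n : ℝ))
      = x ^ 0 / (Nat.factorial 0 : ℝ) + ∑' n : ℕ, x ^ (n + 1) / (Nat.factorial (n + 1) : ℝ) :=
    Summable.tsum_eq_zero_add hS
  have hfac : (∑' n : ℕ, x ^ (n + 1) / (Nat.factorial (n + 1) : ℝ))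
      = x * ∑' n : ℕ, x ^ n / (Nat.factorial (n + 1) : ℝ) := by
    rw [← tsum_mul_left]
    congr 1; ext n; rw [pow_succ]; ring
  have : Real.exp x = 1 + x * ∑' n : ℕ, x ^ n / (Nat.factorial (n + 1) : ℝ) := by
    rw [hsum, h0, hfac]; norm_num
  field_simp
  linarith

/-- For every `c > 0`,
`4·(4c/(e^{4c}-1))·∑_{j=0}^∞ H_{j+1}(4c)^j/(j+2)! < 2`,
where `H_k = ∑_{m=1}^k 1/m` is the harmonic number. -/
theorem stmt3 (c : ℝ) (hc : 0 < c) :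
    4 * (4 * c / (Real.exp (4 * c) - 1)) *
        ∑' j : ℕ, (∑ m ∈ Finset.range (j + 1), (1 : ℝ) / (m + 1)) * (4 * c) ^ j /
          (Nat.factorial (j + 2) : ℝ)
      < 2 := by
  set x : ℝ := 4 * c with hxdef
  have hx : 0 < x := by positivity
  have hex : 1 < Real.exp x := by
    have := Real.add_one_lt_exp hx.ne'
    linarith
  have hden : 0 < Real.exp x - 1 := by linarith
  set f : ℕ → ℝ := fun j =>
    (∑ m ∈ Finset.range (j + 1), (1 : ℝ) / (m + 1)) * x ^ j / (Nat.factorial (j + 2) : ℝ) with hf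
  set g : ℕ → ℝ := fun j => x ^ j / (Nat.factorial (j + 1) : ℝ) / 2 with hg
  have hgsum : Summable g := by
    apply Summable.div_const
    apply Summable.of_nonneg_of_le (fun n => by positivity)
      (fun n => ?_) (Real.summable_pow_div_factorial x)
    have hpow : (0:ℝ) ≤ x ^ n := by positivity
    apply div_le_div_of_nonneg_left hpow (by positivity)
    exact_mod_cast Nat.factorial_le (Nat.le_succ n)
  have hle : ∀ j, f j ≤ g j := by
    intro j
    have h1 : (∑ m ∈ Finset.range (j + 1), (1 : ℝ) / (m + 1)) ≤ (j + 2) / 2 := harm_le j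
    have h2 : (Nat.factorial (j + 2) : ℝ) = (j + 2) * (Nat.factorial (j + 1) : ℝ) := by
      rw [Nat.factorial_succ]; push_cast; ring
    have hH0 : (0:ℝ) ≤ ∑ m ∈ Finset.range (j + 1), (1 : ℝ) / (m + 1) := by positivity
    have hfact1 : (0:ℝ) < (Nat.factorial (j + 1) : ℝ) := by positivity
    have hj2 : (0:ℝ) < (j : ℝ) + 2 := by positivity
    have hpow : (0:ℝ) ≤ x ^ j := by positivity
    rw [hf, hg]
    simp only
    rw [h2, div_div, div_le_div_iff₀ (by positivity) (by positivity)]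
    have := mul_le_mul_of_nonneg_right h1 hpow
    nlinarith [mul_le_mul_of_nonneg_right (mul_le_mul_of_nonneg_right h1 hpow) hfact1.le]
  have hfsum : Summable f :=
    Summable.of_nonneg_of_le (fun j => by positivity) hle hgsum
  have hstrict : f 2 < g 2 := by
    rw [hf, hg]
    simp only
    have : (∑ m ∈ Finset.range 3, (1 : ℝ) / (m + 1)) = 11 / 6 := by
      norm_num [Finset.sum_range_succ]
    rw [this]
    have hx2 : (0:ℝ) < x ^ 2 := by positivity
    norm_num [Nat.factorial]
    nlinarith
  have hlt : (∑' j, f j) < ∑' j, g j := Summable.tsum_lt_tsum hle hstrict hfsum hgsum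
  have hgval : (∑' j, g j) = (Real.exp x - 1) / x / 2 := by
    rw [hg, tsum_div_const, exp_sub_one_eq x hx.ne']
  have key : (∑' j, f j) < (Real.exp x - 1) / x / 2 := hgval ▸ hlt
  have hcoef : 0 < 4 * (x / (Real.exp x - 1)) := by positivity
  calc 4 * (x / (Real.exp x - 1)) * ∑' j, f j
      < 4 * (x / (Real.exp x - 1)) * ((Real.exp x - 1) / x / 2) := by
        exact mul_lt_mul_of_pos_left key hcoef
    _ = 2 := by field_simp; ring
end

section
/- Fix c > 0 and integer i ≥ 1, and let ζ be the unique solution on {i, i+1, ...} of the recursion (α_n + β_n)ζ(n) − α_n ζ(n−1) − β_n ζ(n+1) = 1 for n > i with ζ(i) = 0 given by the standard birth-death first-passage formula, where α_n = n(n−1)/2 and β_n = 2cn. Then ζ(n) = 2∑_{k=i}^{n-1} ∑_{j=0}^∞ (4c)^j/(k)_{j+2} for all n ≥ i+1. -/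
/-!
Write `S k = ∑_{j ≥ 0} (4c)^j / (k)_{j+2}`. Since `α_k / β_k = (k - 1) / (4c)`, the product
`∏_{k=i+1}^{i+d} α_k / β_k` is `(i)_d / (4c)^d`, and multiplying `γ_{i+d+l}` by it leaves
`2 (4c)^l / (i+d)_{l+2}` because `(i)_d (i+d)_{l+2} = (i)_{d+l+2}`. Hence the first series is
`2 S(i)`, the `j`-th summand is `2 S(j+1)`, and shifting the index of the sum gives
`2 ∑_{k=i}^{n-1} S(k)`.
-/

open Finset

lemma prod_range_natCast_add_eq_ascFactorial (k N : ℕ) :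
    ∏ t ∈ range N, ((k + t : ℕ) : ℝ) = (k.ascFactorial N : ℝ) := by
  rw [Nat.ascFactorial_eq_prod_range, Nat.cast_prod]

lemma natCast_ascFactorial_ne_zero {k : ℕ} (hk : 0 < k) (N : ℕ) :
    (k.ascFactorial N : ℝ) ≠ 0 :=
  Nat.cast_ne_zero.2 ((pow_pos hk N).trans_le (Nat.pow_succ_le_ascFactorial k N)).ne'

lemma death_div_birth_eq (c : ℝ) {k : ℝ} (hk : k ≠ 0) :
    (k * (k - 1) / 2) / (2 * c * k) = (k - 1) / (4 * c) := by
  rw [div_div, ← mul_div_mul_left (k - 1) (4 * c) hk]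
  ring_nf

lemma prod_Icc_death_div_birth (c : ℝ) (i d : ℕ) :
    ∏ k ∈ Icc (i + 1) (i + d), ((k : ℝ) * ((k : ℝ) - 1) / 2) / (2 * c * k)
      = (i.ascFactorial d : ℝ) / (4 * c) ^ d := by
  induction d with
  | zero => simp
  | succ d ih =>
    rw [← add_assoc, prod_Icc_succ_top (by omega), ih,
      death_div_birth_eq c (by positivity), Nat.ascFactorial_succ, pow_succ]
    push_cast
    ring

lemma prod_death_div_birth_mul_tsum {c : ℝ} (hc : c ≠ 0) {i : ℕ} (hi : 0 < i) (d : ℕ) :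
    (∏ k ∈ Icc (i + 1) (i + d), ((k : ℝ) * ((k : ℝ) - 1) / 2) / (2 * c * k)) *
        ∑' l : ℕ, 2 * (4 * c) ^ (d + l) / (i.ascFactorial (d + l + 2) : ℝ)
      = 2 * ∑' l : ℕ, (4 * c) ^ l / ((i + d).ascFactorial (l + 2) : ℝ) := by
  rw [prod_Icc_death_div_birth, ← tsum_mul_left, ← tsum_mul_left]
  refine tsum_congr fun l => ?_
  have hfac_i := natCast_ascFactorial_ne_zero hi d
  have hfac_id := natCast_ascFactorial_ne_zero (Nat.add_pos_left hi d) (l + 2)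
  have hc4 : 4 * c ≠ 0 := mul_ne_zero four_ne_zero hc
  rw [add_assoc d l 2, ← Nat.ascFactorial_mul_ascFactorial, pow_add]
  push_cast
  field_simp

/-- For `c > 0`, `i ≥ 1`, the standard birth-death first-passage formula
`ζ(n) = ∑_{m=i}^∞ γ_m + ∑_{j=i}^{n-2} (∏_{k=i+1}^{j+1} α_k/β_k) ∑_{l=j+1}^∞ γ_l`,
with `α_k = k(k-1)/2`, `β_k = 2ck`, `γ_m = 2(4c)^{m-i}/((i)_{m-i+2})`, equals
`2∑_{k=i}^{n-1} ∑_{j=0}^∞ (4c)^j/(k)_{j+2}` for all `n ≥ i+1`. -/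
theorem stmt8 (c : ℝ) (hc : 0 < c) (i : ℕ) (hi : 1 ≤ i) (n : ℕ) (hn : i + 1 ≤ n) :
    (∑' m : ℕ, 2 * (4*c)^m / ∏ t ∈ Finset.range (m+2), ((i + t : ℕ) : ℝ))
      + (∑ j ∈ Finset.Ico i (n-1),
          (∏ k ∈ Finset.Icc (i+1) (j+1), ((k:ℝ)*((k:ℝ)-1)/2) / (2*c*k)) *
            ∑' l : ℕ,
              2 * (4*c)^(j+1+l-i) / ∏ t ∈ Finset.range (j+1+l-i+2), ((i + t : ℕ) : ℝ))
      = 2 * ∑ k ∈ Finset.Ico i n,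
          ∑' j : ℕ, (4*c)^j / ∏ m ∈ Finset.range (j+2), ((k + m : ℕ) : ℝ) := by
  simp only [prod_range_natCast_add_eq_ascFactorial]
  set S : ℕ → ℝ := fun k => ∑' j : ℕ, (4 * c) ^ j / (k.ascFactorial (j + 2) : ℝ)
  have first : ∑' m : ℕ, 2 * (4 * c) ^ m / (i.ascFactorial (m + 2) : ℝ) = 2 * S i := by
    rw [← tsum_mul_left]
    exact tsum_congr fun m => mul_div_assoc _ _ _
  have summand : ∀ j ∈ Ico i (n - 1),
      (∏ k ∈ Icc (i + 1) (j + 1), ((k : ℝ) * ((k : ℝ) - 1) / 2) / (2 * c * k)) *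
        ∑' l : ℕ, 2 * (4 * c) ^ (j + 1 + l - i) / (i.ascFactorial (j + 1 + l - i + 2) : ℝ)
        = 2 * S (j + 1) := by
    intro j hj
    obtain ⟨d, hd⟩ : ∃ d, j + 1 = i + d := 
      ⟨j + 1 - i, by have := (mem_Ico.1 hj).1; omega⟩
    have hshift : ∀ l, j + 1 + l - i = d + l := by omega
    simp only [hshift, S]
    rw [hd]
    exact prod_death_div_birth_mul_tsum hc.ne' hi d
  have split : ∑ k ∈ Ico i n, S k = S i + ∑ j ∈ Ico i (n - 1), S (j + 1) := by
    rw [sum_eq_sum_Ico_succ_bot (by omega), sum_Ico_add', Nat.sub_add_cancel (by omega)]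
  rw [first, sum_congr rfl summand, split, mul_add, mul_sum]
end

section
/- For c > 0 and integers i ≥ 1, n ≥ 1, the lower bound E[W^c_{n,i}] = 2∑_{k=i}^{n-1}(1/(k(k+1)))∑_{j=0}^∞ (4c/(k+2))^j/∏_{l=0}^{j-1}(1+l/(k+2)) > 2∑_{k=i}^{n-1} e^{4c/(k+2)}/(k(k+1)) fails to hold as an identity but holds as a strict inequality; in particular 2∑_{k=i}^{n-1}∑_{j=0}^∞ (4c)^j/(k)_{j+2} > 2∑_{k=i}^{n-1} e^{4c/(k+2)}/(k(k+1)) for all n > i, hence E[W^c_{n,i}] → ∞ as c → ∞. -/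
open Finset Nat

private lemma myP_pos (k j : ℕ) (hk : 1 ≤ k) :
    0 < ∏ m ∈ Finset.range j, ((k + m : ℕ) : ℝ) := by
  apply Finset.prod_pos
  intro m _
  exact_mod_cast Nat.lt_of_lt_of_le Nat.zero_lt_one (by omega)

private lemma myP_le (k : ℕ) : ∀ j : ℕ,
    ∏ m ∈ Finset.range (j + 2), ((k + m : ℕ) : ℝ)
      ≤ (k : ℝ) * ((k : ℝ) + 1) * ((k : ℝ) + 2) ^ j * (j ! : ℝ)
  | 0 => by
      simp [Finset.prod_range_succ]
  | (j + 1) => by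
      have ih := myP_le k j
      rw [show j + 1 + 2 = (j + 2) + 1 by ring, Finset.prod_range_succ]
      have h1 : ((k + (j + 2) : ℕ) : ℝ) ≤ ((k : ℝ) + 2) * ((j : ℝ) + 1) := by
        push_cast
        nlinarith [Nat.cast_nonneg (α := ℝ) k, Nat.cast_nonneg (α := ℝ) j]
      calc (∏ m ∈ Finset.range (j + 2), ((k + m : ℕ) : ℝ)) * ((k + (j + 2) : ℕ) : ℝ)
          ≤ ((k : ℝ) * ((k : ℝ) + 1) * ((k : ℝ) + 2) ^ j * (j ! : ℝ)) *
              (((k : ℝ) + 2) * ((j : ℝ) + 1)) := by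
            apply mul_le_mul ih h1 (Nat.cast_nonneg _)
            positivity
        _ = (k : ℝ) * ((k : ℝ) + 1) * ((k : ℝ) + 2) ^ (j + 1) * ((j+1)! : ℝ) := by
            rw [Nat.factorial_succ]
            push_cast
            ring

private lemma myP_lt (k : ℕ) (hk : 1 ≤ k) :
    ∏ m ∈ Finset.range (2 + 2), ((k + m : ℕ) : ℝ)
      < (k : ℝ) * ((k : ℝ) + 1) * ((k : ℝ) + 2) ^ 2 * ((2:ℕ)! : ℝ) := by
  have hk' : (1:ℝ) ≤ (k:ℝ) := by exact_mod_cast hk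
  simp [Finset.prod_range_succ]
  have hkpos : (0:ℝ) < (k:ℝ) := by linarith
  nlinarith [mul_pos (mul_pos (mul_pos hkpos (by linarith : (0:ℝ) < (k:ℝ)+1))
    (by linarith : (0:ℝ) < (k:ℝ)+2)) (by linarith : (0:ℝ) < (k:ℝ)+1)]

private lemma fact_le_myP (k j : ℕ) (hk : 1 ≤ k) :
    (j ! : ℝ) ≤ ∏ m ∈ Finset.range (j + 2), ((k + m : ℕ) : ℝ) := by
  have h1 : ((j ! : ℕ) : ℝ) ≤ (((j + 2)! : ℕ) : ℝ) := by
    exact_mod_cast Nat.factorial_le (by omega)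
  refine h1.trans ?_
  have h2 : (((j + 2)! : ℕ) : ℝ) = ∏ m ∈ Finset.range (j + 2), ((m + 1 : ℕ) : ℝ) := by
    have h3 : (j + 2)! = ∏ x ∈ Finset.range (j + 2), (x + 1) :=
      (Finset.prod_range_add_one_eq_factorial (j + 2)).symm
    rw [h3, Nat.cast_prod]
  rw [h2]
  apply Finset.prod_le_prod (fun m _ => Nat.cast_nonneg _)
  intro m _
  exact_mod_cast by omega

private lemma mysummable (k : ℕ) (hk : 1 ≤ k) (c : ℝ) (hc : 0 ≤ c) :
    Summable (fun j : ℕ => (4*c)^j / ∏ m ∈ Finset.range (j+2), ((k + m : ℕ) : ℝ)) := by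
  apply Summable.of_nonneg_of_le
  · intro j
    have := myP_pos k (j+2) hk
    positivity
  · intro j
    have h1 : (0:ℝ) < (j ! : ℝ) := by exact_mod_cast Nat.factorial_pos j
    exact div_le_div_of_nonneg_left (by positivity) h1 (fact_le_myP k j hk)
  · exact Real.summable_pow_div_factorial (4*c)

private lemma key_lt (k : ℕ) (hk : 1 ≤ k) (c : ℝ) (hc : 0 < c) :
    Real.exp (4*c/((k:ℝ)+2)) / ((k:ℝ)*((k:ℝ)+1))
      < ∑' j : ℕ, (4*c)^j / ∏ m ∈ Finset.range (j+2), ((k + m : ℕ) : ℝ) := by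
  have hk' : (1:ℝ) ≤ (k:ℝ) := by exact_mod_cast hk
  have hkk : (0:ℝ) < (k:ℝ)*((k:ℝ)+1) := by nlinarith
  have hk2 : (0:ℝ) < (k:ℝ)+2 := by linarith
  have hexp : Real.exp (4*c/((k:ℝ)+2)) / ((k:ℝ)*((k:ℝ)+1))
      = ∑' j : ℕ, (4*c/((k:ℝ)+2))^j / (j ! : ℝ) / ((k:ℝ)*((k:ℝ)+1)) := by
    rw [Real.exp_eq_exp_ℝ, NormedSpace.exp_eq_tsum_div, ← tsum_div_const]
  rw [hexp]
  have heq : ∀ j : ℕ, (4*c/((k:ℝ)+2))^j / (j ! : ℝ) / ((k:ℝ)*((k:ℝ)+1))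
      = (4*c)^j / ((k : ℝ) * ((k : ℝ) + 1) * ((k : ℝ) + 2) ^ j * (j ! : ℝ)) := by
    intro j
    rw [div_pow]
    have h1 : (0:ℝ) < (j ! : ℝ) := by exact_mod_cast Nat.factorial_pos j
    field_simp
  apply Summable.tsum_lt_tsum_of_nonneg (i := 2)
  · intro j
    have h1 : (0:ℝ) < (j ! : ℝ) := by exact_mod_cast Nat.factorial_pos j
    positivity
  · intro j
    rw [heq j]
    exact div_le_div_of_nonneg_left (by positivity) (myP_pos k (j+2) hk) (myP_le k j)
  · rw [heq 2]
    exact div_lt_div_of_pos_left (by positivity) (myP_pos k (2+2) hk) (myP_lt k hk)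
  · exact mysummable k hk c hc.le

/-- For integers `1 ≤ i < n`: for every `c > 0`,
`2∑_{k=i}^{n-1}∑_{j=0}^∞ (4c)^j/(k)_{j+2} > 2∑_{k=i}^{n-1} e^{4c/(k+2)}/(k(k+1))`,
hence the expected first passage time `E[W^c_{n,i}]` tends to infinity as `c → ∞`. -/
theorem stmt12 (i n : ℕ) (hi : 1 ≤ i) (hin : i < n) :
    (∀ c : ℝ, 0 < c →
      2 * ∑ k ∈ Finset.Ico i n,
          ∑' j : ℕ, (4*c)^j / ∏ m ∈ Finset.range (j+2), ((k + m : ℕ) : ℝ)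
        > 2 * ∑ k ∈ Finset.Ico i n, Real.exp (4*c/((k:ℝ)+2)) / ((k:ℝ)*((k:ℝ)+1))) ∧
    Filter.Tendsto (fun c : ℝ =>
        2 * ∑ k ∈ Finset.Ico i n,
          ∑' j : ℕ, (4*c)^j / ∏ m ∈ Finset.range (j+2), ((k + m : ℕ) : ℝ))
      Filter.atTop Filter.atTop := by
  have hne : (Finset.Ico i n).Nonempty := ⟨i, Finset.mem_Ico.2 ⟨le_refl i, hin⟩⟩
  constructor
  · intro c hc
    apply mul_lt_mul_of_pos_left _ (by norm_num : (0:ℝ) < 2)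
    apply Finset.sum_lt_sum_of_nonempty hne
    intro k hkmem
    have hk : 1 ≤ k := le_trans hi (Finset.mem_Ico.1 hkmem).1
    exact key_lt k hk c hc
  · -- tendsto
    have hi' : (1:ℝ) ≤ (i:ℝ) := by exact_mod_cast hi
    set D : ℝ := (i:ℝ) * ((i:ℝ)+1) * ((i:ℝ)+2) with hD
    have hDpos : 0 < D := by positivity
    have hbound : ∀ c : ℝ, 0 ≤ c →
        2 * (4*c) / D ≤ 2 * ∑ k ∈ Finset.Ico i n,
          ∑' j : ℕ, (4*c)^j / ∏ m ∈ Finset.range (j+2), ((k + m : ℕ) : ℝ) := by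
      intro c hc
      have htsum_nonneg : ∀ k ∈ Finset.Ico i n,
          0 ≤ ∑' j : ℕ, (4*c)^j / ∏ m ∈ Finset.range (j+2), ((k + m : ℕ) : ℝ) := by
        intro k hkmem
        have hk : 1 ≤ k := le_trans hi (Finset.mem_Ico.1 hkmem).1
        apply tsum_nonneg
        intro j
        have := myP_pos k (j+2) hk
        positivity
      have h1 : (4*c)^1 / ∏ m ∈ Finset.range (1+2), ((i + m : ℕ) : ℝ)
          ≤ ∑' j : ℕ, (4*c)^j / ∏ m ∈ Finset.range (j+2), ((i + m : ℕ) : ℝ) := by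
        apply Summable.le_tsum (mysummable i hi c hc) 1
        intro j _
        have := myP_pos i (j+2) hi
        positivity
      have h2 : ∑' j : ℕ, (4*c)^j / ∏ m ∈ Finset.range (j+2), ((i + m : ℕ) : ℝ)
          ≤ ∑ k ∈ Finset.Ico i n,
            ∑' j : ℕ, (4*c)^j / ∏ m ∈ Finset.range (j+2), ((k + m : ℕ) : ℝ) :=
        Finset.single_le_sum htsum_nonneg (Finset.mem_Ico.2 ⟨le_refl i, hin⟩)
      have h3 : (4*c)^1 / ∏ m ∈ Finset.range (1+2), ((i + m : ℕ) : ℝ) = (4*c) / D := by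
        rw [pow_one, hD]
        simp only [Finset.prod_range_succ, Finset.prod_range_zero, one_mul]
        push_cast
        ring
      have := le_trans h1 h2
      rw [h3] at this
      calc 2 * (4*c) / D = 2 * ((4*c)/D) := by ring
        _ ≤ _ := by linarith
    have hlin : Filter.Tendsto (fun c : ℝ => 2 * (4*c) / D) Filter.atTop Filter.atTop := by
      apply Filter.Tendsto.atTop_div_const hDpos
      apply Filter.Tendsto.const_mul_atTop (by norm_num : (0:ℝ) < 2)
      exact (Filter.tendsto_id.const_mul_atTop (by norm_num : (0:ℝ) < 4))
    apply Filter.tendsto_atTop_mono' _ _ hlin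
    filter_upwards [Filter.eventually_ge_atTop 0] with c hc
    exact hbound c hc
end

section
/- For integers l ≥ 0, n ≥ 1, i ≥ 0, the integral ∫_{−1}^{1} C^{3/2}_l(z)(1+z)^n(1−z)^i dz equals 2^{n+i} i!(l+1)(l+2)/((n+1)_{i+1}) · ₃F₂(−l, l+3, i+1; 2, i+n+2; 1), where ₃F₂ is the (terminating) generalized hypergeometric sum ∑_{j=0}^l (−l)_j(l+3)_j(i+1)_j / ((2)_j(i+n+2)_j j!). -/
/-!
By the classical hypergeometric form of the Gegenbauer polynomials,
`C^{3/2}_l(z) = (l+1)(l+2)/2 · ₂F₁(-l, l+3; 2; (1-z)/2)`; both sides obey the three-term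
recurrence `(l+2) C_{l+2} = (2l+5) z C_{l+1} - (l+3) C_l` and agree for `l = 0, 1`.
Substituting this finite sum, the integral becomes a combination of Beta integrals
`∫_{-1}^{1} (1+z)^n (1-z)^m dz = 2^{n+m+1} n! m! / (n+m+1)!`, and rewriting the factorials as
Pochhammer symbols gives the `₃F₂` sum.
-/

/-- The Gegenbauer (ultraspherical) polynomial `C^{3/2}_l(x) = T¹_l(x)`, via the
standard explicit formula
`C^α_l(x) = ∑_{k=0}^{⌊l/2⌋} (-1)^k (α)_{l-k}/(k!(l-2k)!) (2x)^{l-2k}` with `α = 3/2`. -/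
noncomputable def gegenbauer32 (l : ℕ) (x : ℝ) : ℝ :=
  ∑ k ∈ Finset.range (l / 2 + 1),
    (-1 : ℝ)^k * (∏ t ∈ Finset.range (l - k), ((3:ℝ)/2 + t)) /
      ((Nat.factorial k : ℝ) * (Nat.factorial (l - 2*k) : ℝ)) * (2*x)^(l - 2*k)

open Finset Polynomial Nat

theorem ascPochhammer_eval_eq_prod_range {R : Type*} [CommSemiring R] (n : ℕ) (r : R) :
    (ascPochhammer R n).eval r = ∏ j ∈ range n, (r + j) := by
  induction n with
  | zero => simp
  | succ n ih => rw [ascPochhammer_succ_eval, ih, prod_range_succ]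

theorem ascPochhammer_succ_eval_left {R : Type*} [CommSemiring R] (n : ℕ) (r : R) :
    (ascPochhammer R (n + 1)).eval r = r * (ascPochhammer R n).eval (r + 1) := by
  simp [ascPochhammer_succ_left, eval_comp]

theorem mul_ascPochhammer_succ_eval_add_one {R : Type*} [CommSemiring R] (n : ℕ) (r : R) :
    r * (ascPochhammer R (n + 1)).eval (r + 1)
      = (ascPochhammer R n).eval r * (r + n) * (r + n + 1) := by
  rw [← ascPochhammer_succ_eval_left, ascPochhammer_succ_eval, ascPochhammer_succ_eval]
  push_cast
  ring

theorem ascPochhammer_eval_add {R : Type*} [CommSemiring R] (a b : ℕ) (r : R) :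
    (ascPochhammer R (a + b)).eval r
      = (ascPochhammer R a).eval r * (ascPochhammer R b).eval (r + a) := by
  simp [ascPochhammer_eval_eq_prod_range, prod_range_add, add_assoc]

theorem factorial_add_eq_mul_ascPochhammer (a b : ℕ) :
    ((a + b)! : ℝ) = a ! * (ascPochhammer ℝ b).eval ((a : ℝ) + 1) := by
  rw [← factorial_mul_ascFactorial, ← ascPochhammer_nat_eq_ascFactorial]
  push_cast
  rfl

theorem integral_one_add_pow (n : ℕ) :
    ∫ z in (-1 : ℝ)..1, (1 + z) ^ n = 2 ^ (n + 1) / (n + 1) := by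
  rw [intervalIntegral.integral_comp_add_left (fun z => z ^ n), integral_pow]
  norm_num

theorem integral_one_add_pow_mul_one_sub_pow_succ (n m : ℕ) :
    ∫ z in (-1 : ℝ)..1, (1 + z) ^ n * (1 - z) ^ (m + 1)
      = (m + 1) / (n + 1) * ∫ z in (-1 : ℝ)..1, (1 + z) ^ (n + 1) * (1 - z) ^ m := by
  have hu (x : ℝ) : HasDerivAt (fun z : ℝ => (1 - z) ^ (m + 1)) (-(m + 1) * (1 - x) ^ m) x :=
    (((hasDerivAt_id' x).const_sub 1).fun_pow (m + 1)).congr_deriv (by push_cast; ring)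
  have hv (x : ℝ) : HasDerivAt (fun z : ℝ => (1 + z) ^ (n + 1) / (n + 1)) ((1 + x) ^ n) x :=
    ((((hasDerivAt_id' x).const_add 1).fun_pow (n + 1)).div_const ((n : ℝ) + 1)).congr_deriv
      (by field_simp; simp)
  have hibp := intervalIntegral.integral_mul_deriv_eq_deriv_mul (a := -1) (b := 1)
    (fun x _ => hu x) (fun x _ => hv x)
    (Continuous.intervalIntegrable (by fun_prop) _ _)
    (Continuous.intervalIntegrable (by fun_prop) _ _)
  norm_num at hibp
  rw [← intervalIntegral.integral_const_mul]
  refine (intervalIntegral.integral_congr fun z _ => mul_comm _ _).trans (hibp.trans ?_)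
  rw [← intervalIntegral.integral_neg]
  refine intervalIntegral.integral_congr fun z _ => ?_
  field_simp
  ring

theorem integral_one_add_pow_mul_one_sub_pow (n m : ℕ) :
    ∫ z in (-1 : ℝ)..1, (1 + z) ^ n * (1 - z) ^ m
      = 2 ^ (n + m + 1) * n ! * m ! / (n + m + 1)! := by
  induction m generalizing n with
  | zero =>
    simp only [pow_zero, mul_one, integral_one_add_pow, factorial_zero, add_zero, factorial_succ]
    push_cast
    field_simp
  | succ m ih =>
    rw [integral_one_add_pow_mul_one_sub_pow_succ, ih,
      show n + 1 + m + 1 = n + (m + 1) + 1 by omega, factorial_succ n, factorial_succ m]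
    push_cast
    field_simp

noncomputable def hypergeomCoeff (l j : ℕ) : ℝ :=
  (ascPochhammer ℝ j).eval (-(l : ℝ)) * (ascPochhammer ℝ j).eval ((l : ℝ) + 3) /
    ((ascPochhammer ℝ j).eval 2 * j !)

theorem hypergeomCoeff_eq_zero {l j : ℕ} (h : l < j) : hypergeomCoeff l j = 0 := by
  simp [hypergeomCoeff, ascPochhammer_eval_neg_coe_nat_of_lt h]

theorem ascPochhammer_eval_two_mul_factorial_succ (j : ℕ) :
    (ascPochhammer ℝ (j + 1)).eval 2 * ((j + 1)! : ℝ)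
      = ((j : ℝ) + 2) * (j + 1) * ((ascPochhammer ℝ j).eval 2 * j !) := by
  rw [ascPochhammer_succ_eval, factorial_succ]
  push_cast
  ring

theorem hypergeomCoeff_succ (l j : ℕ) :
    ((j : ℝ) + 2) * (j + 1) * hypergeomCoeff l (j + 1)
      = (j - l) * (l + 3 + j) * hypergeomCoeff l j := by
  have hD : (ascPochhammer ℝ j).eval 2 ≠ 0 := (ascPochhammer_pos j 2 two_pos).ne'
  rw [hypergeomCoeff, hypergeomCoeff, ascPochhammer_eval_two_mul_factorial_succ,
    ascPochhammer_succ_eval, ascPochhammer_succ_eval]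
  field_simp
  ring

theorem hypergeomCoeff_succ_succ (l j : ℕ) :
    ((j : ℝ) + 2) * (j + 1) * (l + 3) * hypergeomCoeff (l + 1) (j + 1)
      = -(l + 1) * (l + 3 + j) * (l + 4 + j) * hypergeomCoeff l j := by
  have hD : (ascPochhammer ℝ j).eval 2 ≠ 0 := (ascPochhammer_pos j 2 two_pos).ne'
  have h := mul_ascPochhammer_succ_eval_add_one j ((l : ℝ) + 3)
  rw [hypergeomCoeff, hypergeomCoeff, ascPochhammer_eval_two_mul_factorial_succ,
    ascPochhammer_succ_eval_left]
  push_cast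
  rw [show -((l : ℝ) + 1) + 1 = -l by ring, show (l : ℝ) + 1 + 3 = l + 3 + 1 by ring]
  field_simp
  linear_combination -(ascPochhammer ℝ j).eval (-(l : ℝ)) * h

theorem hypergeomCoeff_succ_pred (l j : ℕ) :
    ((j : ℝ) + 2) * (j + 1) * (l + 1) * hypergeomCoeff l (j + 1)
      = -(l + 3) * (j - l - 1) * (j - l) * hypergeomCoeff (l + 1) j := by
  have hD : (ascPochhammer ℝ j).eval 2 ≠ 0 := (ascPochhammer_pos j 2 two_pos).ne'
  have h := mul_ascPochhammer_succ_eval_add_one j (-((l : ℝ) + 1))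
  rw [show -((l : ℝ) + 1) + 1 = -l by ring] at h
  rw [hypergeomCoeff, hypergeomCoeff, ascPochhammer_eval_two_mul_factorial_succ,
    ascPochhammer_succ_eval_left (r := (l : ℝ) + 3)]
  push_cast
  rw [show (l : ℝ) + 3 + 1 = l + 1 + 3 by ring]
  field_simp
  linear_combination -(ascPochhammer ℝ j).eval ((l : ℝ) + 1 + 3) * h

theorem hypergeomCoeff_recurrence (l j : ℕ) :
    ((l : ℝ) + 4) * hypergeomCoeff (l + 2) (j + 1)
      = (2 * l + 5) * (hypergeomCoeff (l + 1) (j + 1) - 2 * hypergeomCoeff (l + 1) j)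
        - (l + 1) * hypergeomCoeff l (j + 1) := by
  have h₂ := hypergeomCoeff_succ_succ (l + 1) j
  have h₁ := hypergeomCoeff_succ (l + 1) j
  have h₀ := hypergeomCoeff_succ_pred l j
  push_cast at h₂ h₁
  refine mul_left_cancel₀ (show ((j : ℝ) + 2) * (j + 1) ≠ 0 by positivity) ?_
  linear_combination h₂ - (2 * (l : ℝ) + 5) * h₁ + h₀

/-- `₂F₁(-l, l+3; 2; t)`; the series stops at `j = l` because `(-l)_j = 0` for `j > l`. -/
noncomputable def hypergeom (l : ℕ) (t : ℝ) : ℝ :=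
  ∑ j ∈ range (l + 1), hypergeomCoeff l j * t ^ j

theorem hypergeom_eq_sum_range {l N : ℕ} (h : l < N) (t : ℝ) :
    hypergeom l t = ∑ j ∈ range N, hypergeomCoeff l j * t ^ j := by
  refine sum_subset (range_subset_range.2 h) fun j _ hj => ?_
  rw [hypergeomCoeff_eq_zero (by simpa using hj), zero_mul]

theorem hypergeom_recurrence (l : ℕ) (t : ℝ) :
    ((l : ℝ) + 4) * hypergeom (l + 2) t
      = (2 * l + 5) * (1 - 2 * t) * hypergeom (l + 1) t - (l + 1) * hypergeom l t := by
  have split (k : ℕ) (hk : k ≤ l + 2) :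
      hypergeom k t = ∑ j ∈ range (l + 2), hypergeomCoeff k (j + 1) * t ^ (j + 1) + 1 := by
    rw [hypergeom_eq_sum_range (show k < l + 3 by omega), sum_range_succ']
    simp [hypergeomCoeff]
  have hshift : t * hypergeom (l + 1) t
      = ∑ j ∈ range (l + 2), hypergeomCoeff (l + 1) j * t ^ (j + 1) := by
    rw [hypergeom, mul_sum]
    exact sum_congr rfl fun j _ => by ring
  have hcoeff :
      ((l : ℝ) + 4) * ∑ j ∈ range (l + 2), hypergeomCoeff (l + 2) (j + 1) * t ^ (j + 1)
        = (2 * l + 5) * ∑ j ∈ range (l + 2), hypergeomCoeff (l + 1) (j + 1) * t ^ (j + 1)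
          - 2 * (2 * l + 5) * ∑ j ∈ range (l + 2), hypergeomCoeff (l + 1) j * t ^ (j + 1)
          - (l + 1) * ∑ j ∈ range (l + 2), hypergeomCoeff l (j + 1) * t ^ (j + 1) := by
    simp only [mul_sum, ← sum_sub_distrib]
    exact sum_congr rfl fun j _ => by
      linear_combination t ^ (j + 1) * hypergeomCoeff_recurrence l j
  rw [split (l + 1) (by omega)] at hshift
  rw [split (l + 2) le_rfl, split (l + 1) (by omega), split l (by omega)]
  linear_combination hcoeff + 2 * (2 * (l : ℝ) + 5) * hshift

/-- The summand of index `k` of `gegenbauer32 (2 * k + r)`. -/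
noncomputable def gegenbauerTerm (k r : ℕ) (z : ℝ) : ℝ :=
  (-1) ^ k * (ascPochhammer ℝ (k + r)).eval (3 / 2) / (k ! * r !) * (2 * z) ^ r

theorem gegenbauerTerm_succ_right (k r : ℕ) (z : ℝ) :
    ((r : ℝ) + 1) * gegenbauerTerm k (r + 1) z
      = (2 * k + 2 * r + 3) * z * gegenbauerTerm k r z := by
  rw [gegenbauerTerm, gegenbauerTerm, ← add_assoc, ascPochhammer_succ_eval, factorial_succ,
    pow_succ]
  push_cast
  field_simp
  ring

theorem gegenbauerTerm_succ_left (k r : ℕ) (z : ℝ) :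
    2 * ((k : ℝ) + 1) * gegenbauerTerm (k + 1) r z
      = -(2 * k + 2 * r + 3) * gegenbauerTerm k r z := by
  rw [gegenbauerTerm, gegenbauerTerm, add_right_comm, ascPochhammer_succ_eval, factorial_succ,
    pow_succ]
  push_cast
  field_simp
  ring

theorem gegenbauerTerm_recurrence (k r : ℕ) (z : ℝ) :
    (2 * (k : ℝ) + r + 3) * gegenbauerTerm (k + 1) (r + 1) z
      = (4 * k + 2 * r + 7) * z * gegenbauerTerm (k + 1) r z
        - (2 * k + r + 4) * gegenbauerTerm k (r + 1) z := by
  have hr := gegenbauerTerm_succ_right (k + 1) r z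
  have hk := gegenbauerTerm_succ_left k (r + 1) z
  push_cast at hr hk
  refine mul_left_cancel₀ (show 2 * (k : ℝ) + 2 * r + 5 ≠ 0 by positivity) ?_
  linear_combination (4 * (k : ℝ) + 2 * r + 7) * hr + (2 * (k : ℝ) + r + 4) * hk

/-- The `k`-th summand of `gegenbauer32 l`, extended by `0` past `k = l / 2`, where `l - 2 * k`
would truncate. -/
noncomputable def gegenbauerSummand (l k : ℕ) (z : ℝ) : ℝ :=
  if 2 * k ≤ l then gegenbauerTerm k (l - 2 * k) z else 0

theorem gegenbauer32_eq_sum_range {l N : ℕ} (h : l / 2 < N) (z : ℝ) :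
    gegenbauer32 l z = ∑ k ∈ range N, gegenbauerSummand l k z := by
  rw [← sum_subset (range_subset_range.2 h) fun k _ hk => ?_]
  · refine sum_congr rfl fun k hk => ?_
    have hk : 2 * k ≤ l := by rw [mem_range] at hk; omega
    rw [gegenbauerSummand, if_pos hk, gegenbauerTerm, ← ascPochhammer_eval_eq_prod_range,
      show k + (l - 2 * k) = l - k by omega]
  · rw [mem_range] at hk
    rw [gegenbauerSummand, if_neg (by omega)]

theorem gegenbauerSummand_recurrence (l k : ℕ) (z : ℝ) :
    ((l : ℝ) + 2) * gegenbauerSummand (l + 2) (k + 1) z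
      = (2 * l + 5) * z * gegenbauerSummand (l + 1) (k + 1) z
        - (l + 3) * gegenbauerSummand l k z := by
  simp only [gegenbauerSummand]
  rcases lt_trichotomy (2 * k) l with hlt | rfl | hgt
  · obtain ⟨r, rfl⟩ : ∃ r, l = 2 * k + r + 1 := ⟨l - 2 * k - 1, by omega⟩
    rw [if_pos (by omega), if_pos (by omega), if_pos (by omega),
      show 2 * k + r + 1 + 2 - 2 * (k + 1) = r + 1 by omega,
      show 2 * k + r + 1 + 1 - 2 * (k + 1) = r by omega,
      show 2 * k + r + 1 - 2 * k = r + 1 by omega]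
    push_cast
    linear_combination gegenbauerTerm_recurrence k r z
  · rw [if_pos (by omega), if_neg (by omega), if_pos le_rfl,
      show 2 * k + 2 - 2 * (k + 1) = 0 by omega, Nat.sub_self]
    push_cast
    linear_combination gegenbauerTerm_succ_left k 0 z
  · rw [if_neg (by omega), if_neg (by omega), if_neg (by omega)]
    ring

theorem gegenbauer32_recurrence (l : ℕ) (z : ℝ) :
    ((l : ℝ) + 2) * gegenbauer32 (l + 2) z
      = (2 * l + 5) * z * gegenbauer32 (l + 1) z - (l + 3) * gegenbauer32 l z := by
  have split (m : ℕ) (hm : m ≤ l + 2) : gegenbauer32 m z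
      = ∑ k ∈ range (l + 2), gegenbauerSummand m (k + 1) z + gegenbauerSummand m 0 z := by
    rw [gegenbauer32_eq_sum_range (N := l + 3) (by omega), sum_range_succ']
  have hsum : ∑ k ∈ range (l + 2), ((l : ℝ) + 2) * gegenbauerSummand (l + 2) (k + 1) z
      = ∑ k ∈ range (l + 2), ((2 * l + 5) * z * gegenbauerSummand (l + 1) (k + 1) z
        - (l + 3) * gegenbauerSummand l k z) :=
    sum_congr rfl fun k _ => gegenbauerSummand_recurrence l k z
  have hzero : ((l : ℝ) + 2) * gegenbauerSummand (l + 2) 0 z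
      = (2 * l + 5) * z * gegenbauerSummand (l + 1) 0 z := by
    simp only [gegenbauerSummand, if_pos (Nat.zero_le _), mul_zero, Nat.sub_zero]
    have h := gegenbauerTerm_succ_right 0 (l + 1) z
    push_cast at h
    linear_combination h
  rw [← mul_sum, sum_sub_distrib, ← mul_sum, ← mul_sum] at hsum
  rw [split (l + 2) le_rfl, split (l + 1) (by omega),
    gegenbauer32_eq_sum_range (N := l + 2) (by omega)]
  linear_combination hsum + hzero

theorem gegenbauer32_eq_hypergeom (l : ℕ) (z : ℝ) :
    gegenbauer32 l z = ((l : ℝ) + 1) * (l + 2) / 2 * hypergeom l ((1 - z) / 2) := by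
  induction l using Nat.twoStepInduction with
  | zero => simp [gegenbauer32, hypergeom, hypergeomCoeff]
  | one =>
    simp [gegenbauer32, hypergeom, hypergeomCoeff, sum_range_succ]
    ring
  | more l ih₀ ih₁ =>
    have hG := gegenbauer32_recurrence l z
    have hF := hypergeom_recurrence l ((1 - z) / 2)
    rw [ih₀, ih₁] at hG
    refine mul_left_cancel₀ (show (l : ℝ) + 2 ≠ 0 by positivity) ?_
    push_cast at hG ⊢
    linear_combination hG - ((l : ℝ) + 2) * ((l : ℝ) + 3) / 2 * hF

theorem integral_gegenbauer32_mul (l n i : ℕ) :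
    ∫ z in (-1 : ℝ)..1, gegenbauer32 l z * (1 + z) ^ n * (1 - z) ^ i
      = ((l : ℝ) + 1) * (l + 2) / 2 * ∑ j ∈ range (l + 1),
          hypergeomCoeff l j / 2 ^ j * ∫ z in (-1 : ℝ)..1, (1 + z) ^ n * (1 - z) ^ (i + j) := by
  simp_rw [gegenbauer32_eq_hypergeom, hypergeom, mul_sum, sum_mul]
  rw [intervalIntegral.integral_finsetSum fun j _ =>
    Continuous.intervalIntegrable (by fun_prop) _ _]
  refine sum_congr rfl fun j _ => ?_
  rw [← mul_assoc, ← intervalIntegral.integral_const_mul]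
  refine intervalIntegral.integral_congr fun z _ => ?_
  simp only [div_pow, pow_add]
  ring

theorem stmt14_general (l n i : ℕ) :
    (∫ z in (-1:ℝ)..1, gegenbauer32 l z * (1+z)^n * (1-z)^i)
      = 2^(n+i) * (Nat.factorial i : ℝ) * ((l:ℝ)+1) * ((l:ℝ)+2) /
          (∏ t ∈ Finset.range (i+1), ((n:ℝ)+1+t)) *
        ∑ j ∈ Finset.range (l+1),
          (∏ t ∈ Finset.range j, (-(l:ℝ)+t)) * (∏ t ∈ Finset.range j, ((l:ℝ)+3+t)) *
              (∏ t ∈ Finset.range j, ((i:ℝ)+1+t)) /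
            ((∏ t ∈ Finset.range j, ((2:ℝ)+t)) *
              (∏ t ∈ Finset.range j, ((i:ℝ)+(n:ℝ)+2+t)) * (Nat.factorial j : ℝ)) := by
  simp only [← ascPochhammer_eval_eq_prod_range]
  rw [integral_gegenbauer32_mul, mul_sum, mul_sum]
  refine sum_congr rfl fun j _ => ?_
  rw [integral_one_add_pow_mul_one_sub_pow, show n + (i + j) + 1 = n + (i + 1 + j) by omega,
    factorial_add_eq_mul_ascPochhammer i, factorial_add_eq_mul_ascPochhammer n,
    ascPochhammer_eval_add, hypergeomCoeff]
  rw [show (n : ℝ) + 1 + ((i + 1 : ℕ) : ℝ) = i + n + 2 by push_cast; ring]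
  have h₁ : (ascPochhammer ℝ (i + 1)).eval ((n : ℝ) + 1) ≠ 0 :=
    (ascPochhammer_pos _ _ (by positivity)).ne'
  have h₂ : (ascPochhammer ℝ j).eval ((i : ℝ) + n + 2) ≠ 0 :=
    (ascPochhammer_pos _ _ (by positivity)).ne'
  have h₃ : (ascPochhammer ℝ j).eval (2 : ℝ) ≠ 0 := (ascPochhammer_pos _ _ two_pos).ne'
  field_simp
  ring

/-- For `l ≥ 0`, `n ≥ 1`, `i ≥ 0`,
`∫_{−1}^{1} C^{3/2}_l(z)(1+z)^n(1−z)^i dz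
  = 2^{n+i} i!(l+1)(l+2)/((n+1)_{i+1}) · ₃F₂(−l, l+3, i+1; 2, i+n+2; 1)`,
with the terminating hypergeometric sum written out. -/
theorem stmt14 (l n i : ℕ) (hn : 1 ≤ n) :
    (∫ z in (-1:ℝ)..1, gegenbauer32 l z * (1+z)^n * (1-z)^i)
      = 2^(n+i) * (Nat.factorial i : ℝ) * ((l:ℝ)+1) * ((l:ℝ)+2) /
          (∏ t ∈ Finset.range (i+1), ((n:ℝ)+1+t)) *
        ∑ j ∈ Finset.range (l+1),
          (∏ t ∈ Finset.range j, (-(l:ℝ)+t)) * (∏ t ∈ Finset.range j, ((l:ℝ)+3+t)) *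
              (∏ t ∈ Finset.range j, ((i:ℝ)+1+t)) /
            ((∏ t ∈ Finset.range j, ((2:ℝ)+t)) *
              (∏ t ∈ Finset.range j, ((i:ℝ)+(n:ℝ)+2+t)) * (Nat.factorial j : ℝ)) :=
  stmt14_general l n i
end

section
/- Suppose η: {1,2,...} → ℝ satisfies (λ₀ − α_n − β_n)η(n) + α_n η(n−1) + β_n η(n+1) = 0 for all n ≥ 1 (with the convention α₁ = 0) and η(1) = −2c and η(2) = λ₀ − 2c, where α_n = n(n−1)/2, β_n = 2cn, c > 0 and 0 < λ₀. Assume η has exactly one sign change: η(i) ≤ 0 for 1 ≤ i ≤ L−1 and η(i) > 0 for i ≥ L, and that ∑_{i=1}^∞ η(i)π_i = 0 where π_i = (4c)^i/(i!(e^{4c}−1)), with ∑|η(i)|π_i < ∞. Then η is strictly increasing: η(n+1) > η(n) for all n ≥ 1. -/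
set_option maxHeartbeats 1000000

noncomputable def stmt16W (c : ℝ) (i : ℕ) : ℝ :=
  (4*c)^(i+1) / ((Nat.factorial (i+1) : ℝ) * (Real.exp (4*c) - 1))

/-- If `η` satisfies the eigen-recursion
`(λ₀ − α_n − β_n)η(n) + α_n η(n−1) + β_n η(n+1) = 0` for `n ≥ 1` (with `α₁ = 0`),
`η(1) = −2c`, `η(2) = λ₀ − 2c`, has exactly one sign change (nonpositive up to `L−1`,
positive from `L` on), and is orthogonal to the zero-truncated Poisson weights
`π_i = (4c)^i/(i!(e^{4c}−1))` with absolute summability, then `η` is strictly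
increasing. Here `α_n = n(n−1)/2`, `β_n = 2cn`, `c > 0`, `λ₀ > 0`. -/
theorem stmt16 (c lam0 : ℝ) (hc : 0 < c) (hlam : 0 < lam0)
    (η : ℕ → ℝ) (L : ℕ)
    (hrec : ∀ n : ℕ, 1 ≤ n →
      (lam0 - (n:ℝ)*((n:ℝ)-1)/2 - 2*c*n) * η n
        + ((n:ℝ)*((n:ℝ)-1)/2) * η (n-1) + (2*c*n) * η (n+1) = 0)
    (h1 : η 1 = -2*c) (h2 : η 2 = lam0 - 2*c)
    (hneg : ∀ i : ℕ, 1 ≤ i → i ≤ L - 1 → η i ≤ 0)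
    (hpos : ∀ i : ℕ, L ≤ i → 0 < η i)
    (hsummable : Summable (fun i : ℕ =>
      |η (i+1)| * ((4*c)^(i+1) / ((Nat.factorial (i+1) : ℝ) * (Real.exp (4*c) - 1)))))
    (hzero : ∑' i : ℕ,
      η (i+1) * ((4*c)^(i+1) / ((Nat.factorial (i+1) : ℝ) * (Real.exp (4*c) - 1))) = 0) :
    ∀ n : ℕ, 1 ≤ n → η n < η (n+1) := by
  have hE : (0:ℝ) < Real.exp (4*c) - 1 := by
    have h4 : (4:ℝ)*c ≠ 0 := by positivity
    nlinarith [Real.add_one_lt_exp h4, hc]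
  have hw : ∀ i : ℕ, 0 < stmt16W c i := by
    intro i
    apply div_pos (by positivity)
    exact mul_pos (by exact_mod_cast Nat.factorial_pos (i+1)) hE
  have habs : Summable (fun i : ℕ => |η (i+1)| * stmt16W c i) := hsummable
  have hzero' : ∑' i : ℕ, η (i+1) * stmt16W c i = 0 := hzero
  have hsum' : Summable (fun i : ℕ => η (i+1) * stmt16W c i) := by
    have h : (fun i : ℕ => |η (i+1) * stmt16W c i|) =
        fun i : ℕ => |η (i+1)| * stmt16W c i := by
      funext i; rw [abs_mul, abs_of_pos (hw i)]
    exact Summable.of_abs (h ▸ habs)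
  have hL : 2 ≤ L := by
    by_contra h
    push_neg at h
    have := hpos 1 (by omega)
    rw [h1] at this; linarith
  -- ratio identity
  have hwratio : ∀ n : ℕ, 1 ≤ n →
      ((n:ℝ)+1)*(n:ℝ)/2 * stmt16W c n = 2*c*(n:ℝ) * stmt16W c (n-1) := by
    intro n hn
    obtain ⟨m, rfl⟩ : ∃ m, n = m + 1 := ⟨n-1, (Nat.succ_pred_eq_of_pos hn).symm⟩
    simp only [Nat.add_sub_cancel, stmt16W]
    have hf1 : ((Nat.factorial (m+1)):ℝ) ≠ 0 := by
      exact_mod_cast (Nat.factorial_pos (m+1)).ne'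
    have hf2 : ((Nat.factorial (m+2)):ℝ) ≠ 0 := by
      exact_mod_cast (Nat.factorial_pos (m+2)).ne'
    have hfs : ((Nat.factorial (m+2)):ℝ) = ((m:ℝ)+2) * (Nat.factorial (m+1)) := by
      rw [show m+2 = (m+1)+1 from rfl, Nat.factorial_succ]
      push_cast; ring
    rw [hfs]
    push_cast
    field_simp
    ring
  -- key telescoped identity
  have key : ∀ n : ℕ, 1 ≤ n →
      2*c*(n:ℝ) * stmt16W c (n-1) * (η (n+1) - η n)
        = -lam0 * ∑ i ∈ Finset.range n, η (i+1) * stmt16W c i := by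
    intro n hn
    induction n, hn using Nat.le_induction with
    | base =>
      simp only [Nat.cast_one, Finset.sum_range_one]
      rw [h1, h2]; ring
    | succ n hn ih =>
      have hr := hrec (n+1) (by omega)
      simp only [Nat.add_sub_cancel] at hr ⊢
      push_cast at hr ⊢
      rw [Finset.sum_range_succ]
      have hw' := hwratio n hn
      linear_combination (stmt16W c n) * hr + (η (n+1) - η n) * hw' + ih
  -- region A : n ≤ L-1
  have hA : ∀ n : ℕ, 1 ≤ n → n ≤ L - 1 → 0 < η (n+1) - η n := by
    intro n hn
    induction n, hn using Nat.le_induction with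
    | base =>
      intro _
      rw [h1, h2]; linarith
    | succ n hn ih =>
      intro hle
      have hdn : 0 < η (n+1) - η n := ih (by omega)
      have hη1 : η (n+1) ≤ 0 := hneg (n+1) (by omega) hle
      have hr := hrec (n+1) (by omega)
      simp only [Nat.add_sub_cancel] at hr
      push_cast at hr
      have hn' : (1:ℝ) ≤ (n:ℝ) := by exact_mod_cast hn
      have e1 : 2*c*((n:ℝ)+1) * (η (n+1+1) - η (n+1))
          = ((n:ℝ)+1)*(n:ℝ)/2 * (η (n+1) - η n) - lam0 * η (n+1) := by
        linear_combination hr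
      have hβ : (0:ℝ) < 2*c*((n:ℝ)+1) := by positivity
      have hα : (0:ℝ) < ((n:ℝ)+1)*(n:ℝ)/2 := by nlinarith
      have h5 : 0 < 2*c*((n:ℝ)+1) * (η (n+1+1) - η (n+1)) := by
        rw [e1]
        nlinarith [mul_pos hα hdn, mul_nonneg hlam.le (neg_nonneg.2 hη1)]
      by_contra hcon
      push_neg at hcon
      nlinarith [mul_nonpos_of_nonneg_of_nonpos hβ.le (by linarith : η ((n+1)+1) - η (n+1) ≤ 0)]
  -- region B : L-1 ≤ n
  have hB : ∀ n : ℕ, 1 ≤ n → L - 1 ≤ n → 0 < η (n+1) - η n := by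
    intro n hn hLn
    have hk := key n hn
    have htail_sum : Summable (fun i : ℕ => η (i+n+1) * stmt16W c (i+n)) :=
      (summable_nat_add_iff n).2 hsum'
    have htail_pos : 0 < ∑' i : ℕ, η (i+n+1) * stmt16W c (i+n) := by
      refine Summable.tsum_pos htail_sum (fun i => ?_) 0 ?_
      · exact (mul_pos (hpos (i+n+1) (by omega)) (hw (i+n))).le
      · exact mul_pos (hpos (0+n+1) (by omega)) (hw (0+n))
    have hS : ∑ i ∈ Finset.range n, η (i+1) * stmt16W c i
        = - ∑' i : ℕ, η (i+n+1) * stmt16W c (i+n) := by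
      have h := Summable.sum_add_tsum_nat_add (f := fun i : ℕ => η (i+1) * stmt16W c i) n hsum'
      rw [hzero'] at h
      linarith [h]
    rw [hS] at hk
    have hβ : (0:ℝ) < 2*c*(n:ℝ) * stmt16W c (n-1) := by
      have hn' : (0:ℝ) < (n:ℝ) := by exact_mod_cast hn
      exact mul_pos (by positivity) (hw (n-1))
    have h5 : 0 < 2*c*(n:ℝ) * stmt16W c (n-1) * (η (n+1) - η n) := by
      rw [hk]
      nlinarith [mul_pos hlam htail_pos]
    by_contra hcon
    push_neg at hcon
    nlinarith [mul_nonpos_of_nonneg_of_nonpos hβ.le (by linarith : η (n+1) - η n ≤ 0)]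
  intro n hn
  rcases le_or_gt n (L-1) with h | h
  · linarith [hA n hn h]
  · linarith [hB n hn (by omega)]
end
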